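/- Let 0 < κ < 1, r > 0, s > 0, η ≥ 0 and let I = (I_j)_{j∈ℤ} satisfy I_j ≥ 0 and sup_j I_j ⟨j⟩^{2p} e^{2a|j|+2s⟨j⟩^θ} ≤ κ²r². Then for every q ∈ ℕ and every 0 < κ* ≤ 1, the projection Π^{2q−2} satisfies |Π^{2q−2}H|_{κ*r,s,η} ≤ κ*^{-2} (1 + κ*²/κ²)^q c_κ^q |H|_{r,s,η}, where c_κ := 1/ln(κ^{-2}) if 1/2 < κ² < 1 and c_κ := 2κ² if 0 < κ² ≤ 1/2. -/

import Mathlib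

open scoped ENNReal BigOperators Classical

noncomputable section

/-- Multi-indices: finitely supported functions `ℤ → ℕ`. -/
abbrev MIdx := ℤ →₀ ℕ

/-- Total degree `|α| = Σ_j α_j`. -/
def deg (α : MIdx) : ℕ := ∑ j ∈ α.support, α j

/-- Momentum `π(α - β) = Σ_j j (α_j - β_j)`. -/
def mom (α β : MIdx) : ℤ :=
  ∑ j ∈ α.support ∪ β.support, j * ((α j : ℤ) - (β j : ℤ))

/-- `⟨j⟩ = max(|j|, 1)` as a real number. -/
def jb (j : ℤ) : ℝ := max |(j : ℝ)| 1

/-- The weight `u₀(r)_j = r ⟨j⟩^{-p} e^{-(a|j| + s ⟨j⟩^θ)}`. -/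
def u0 (θ p a r s : ℝ) (j : ℤ) : ℝ :=
  r * (jb j ^ p * Real.exp (a * |(j : ℝ)| + s * jb j ^ θ))⁻¹

/-- The coefficient weight `c^{(j)}_{r,s,η}(α,β) = u₀^{α+β-2e_j} e^{η |π(α-β)|}`. -/
def cwt (θ p a r s η : ℝ) (j : ℤ) (α β : MIdx) : ℝ :=
  (∏ i ∈ insert j (α.support ∪ β.support),
      u0 θ p a r s i ^ (((α i : ℤ) + (β i : ℤ)) - if i = j then 2 else 0)) *
    Real.exp (η * |(mom α β : ℝ)|)

/-- The majorant norm `|H|_{r,s,η} = sup_j Σ_{α,β} |H_{α,β}| β_j u₀^{α+β-2e_j} e^{η|π(α-β)|}`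
(with values in `ℝ≥0∞`). -/
def hnorm (θ p a r s η : ℝ) (H : MIdx → MIdx → ℂ) : ℝ≥0∞ :=
  ⨆ j : ℤ, ∑' q : MIdx × MIdx,
    ENNReal.ofReal (‖H q.1 q.2‖ * (q.2 j : ℝ) * cwt θ p a r s η j q.1 q.2)

/-- A family of coefficients is a Hamiltonian: mass conservation (`H_{α,β} = 0` unless
`|α| = |β|`) and the reality condition `H_{β,α} = conj (H_{α,β})`. -/
def IsHam (H : MIdx → MIdx → ℂ) : Prop :=
  (∀ α β : MIdx, deg α ≠ deg β → H α β = 0) ∧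
  (∀ α β : MIdx, H β α = (starRingEnd ℂ) (H α β))

/-- The set `D_γ` of `γ`-Diophantine frequencies. -/
def Dio (γ : ℝ) : Set (ℤ → ℝ) :=
  {ω | (∀ j : ℤ, |ω j - (j : ℝ) ^ 2| ≤ 1 / 2) ∧
    ∀ ℓ : ℤ →₀ ℤ, ℓ ≠ 0 →
      γ * ∏ n ∈ ℓ.support, (1 + (ℓ n : ℝ) ^ 2 * jb n ^ 2)⁻¹ <
        |∑ j ∈ ℓ.support, ω j * (ℓ j : ℝ)|}

/-- The sup distance `|ω - ω'|_∞` (with values in `ℝ≥0∞`). -/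
def dsup (ω ω' : ℤ → ℝ) : ℝ≥0∞ := ⨆ j : ℤ, ENNReal.ofReal |ω j - ω' j|

/-- The weighted Lipschitz norm
`‖H‖_{r,s,η} = sup_{ω ∈ D_γ} |H(ω)|_{r,s,η} + γ sup_{ω≠ω'} |H(ω)-H(ω')|_{r,s,η} / |ω-ω'|_∞`. -/
def hnormLip (γ θ p a r s η : ℝ) (H : (ℤ → ℝ) → MIdx → MIdx → ℂ) : ℝ≥0∞ :=
  (⨆ ω ∈ Dio γ, hnorm θ p a r s η (H ω)) +
    ENNReal.ofReal γ *
      ⨆ ω ∈ Dio γ, ⨆ ω' ∈ Dio γ,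
        hnorm θ p a r s η (fun α β => H ω α β - H ω' α β) / dsup ω ω'
/-- Product of binomial coefficients `binom(m,δ) = ∏_i binom(m_i, δ_i)`. -/
def binomM (m δ : MIdx) : ℕ := ∏ i ∈ m.support, Nat.choose (m i) (δ i)

/-- `I^ν = ∏_i I_i^{ν_i}`. -/
def Ipow (I : ℤ → ℝ) (ν : MIdx) : ℝ := ∏ i ∈ ν.support, I i ^ ν i

/-- The coefficients of the projection `Π^{2q-2} H` relative to the torus of actions `I`:
writing `(A,B) = (γ+α, γ+β)` with `γ = min(A,B)` and `α, β` with disjoint supports,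
`(Π^{2q-2}H)_{A,B} = Σ_{δ ⪰ γ, |δ| = q} Σ_{m ⪰ δ} binom(m,δ) binom(δ,γ) (-1)^{|δ-γ|}
I^{m-γ} H_{m+α, m+β}` if `|γ| ≤ q`, and `0` otherwise. -/
def projCoef (I : ℤ → ℝ) (q : ℕ) (H : MIdx → MIdx → ℂ) (A B : MIdx) : ℂ :=
  let g : MIdx := A - (A - B)
  let α : MIdx := A - g
  let β : MIdx := B - g
  if deg g ≤ q then
    ∑' dm : MIdx × MIdx,
      (if g ≤ dm.1 ∧ deg dm.1 = q ∧ dm.1 ≤ dm.2 then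
        ((-1 : ℂ) ^ (deg dm.1 - deg g)) * (binomM dm.2 dm.1 : ℂ) * (binomM dm.1 g : ℂ) *
          ((Ipow I (dm.2 - g) : ℝ) : ℂ) * H (dm.2 + α) (dm.2 + β)
      else 0)
  else 0

/-- The constant `c_κ`. -/
def ckap (κ : ℝ) : ℝ := if 1 / 2 < κ ^ 2 then (Real.log ((κ ^ 2)⁻¹))⁻¹ else 2 * κ ^ 2

/-!
Bound each coefficient of `Π^{2q-2}H` by the series of the moduli of its terms. Since
`I_i ≤ κ² u₀(r)_i²`, the weight at `(γ + α, γ + β)` (radius `κ* r`) times `I^{m-γ}` is at most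
`(κ*²/κ²)^{|γ|} κ^{2|m|} κ*^{-2}` times the weight at `(m + α, m + β)` (radius `r`). The
substitution exchanging the common part `γ` of a pair with `m` is a bijection, so what remains is
`Σ_{γ ⪯ δ ⪯ m, |δ| = q} binom(m,δ) binom(δ,γ) (κ*²/κ²)^{|γ|} κ^{2|m|} ≤ (1 + κ*²/κ²)^q c_κ^q`,
by the binomial theorem for multi-indices and `Σ_{|δ| = q} binom(m,δ) ≤ (1 + t)^{|m|} / t^q`,
used with `t = ln κ⁻²` if `κ² > 1/2` and with `t = 1` otherwise.
-/

open Finset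

section MultiIndex

lemma deg_add (α β : MIdx) : deg (α + β) = deg α + deg β := map_add Finsupp.degree α β

lemma deg_mono : Monotone deg := Finsupp.degree_mono

lemma deg_eq_sum_of_support_subset {α : MIdx} {T : Finset ℤ} (h : α.support ⊆ T) :
    deg α = ∑ i ∈ T, α i :=
  sum_subset h fun _ _ hi => Finsupp.notMem_support_iff.mp hi

lemma tsub_tsub_eq_inf (A B : MIdx) : A - (A - B) = A ⊓ B := by
  ext i; simp [Nat.sub_sub_eq_min]

lemma add_tsub_inf_inf_add_tsub_inf (g A B : MIdx) :
    (g + (A - A ⊓ B)) ⊓ (g + (B - A ⊓ B)) = g := by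
  ext i; simp only [Finsupp.inf_apply, Finsupp.add_apply, Finsupp.tsub_apply]; omega

lemma mom_eq_sum_of_subset {α β : MIdx} {T : Finset ℤ} (h : α.support ∪ β.support ⊆ T) :
    mom α β = ∑ i ∈ T, i * ((α i : ℤ) - β i) := by
  refine sum_subset h fun i _ hi => ?_
  simp only [mem_union, Finsupp.mem_support_iff, not_or, not_not] at hi
  simp [hi.1, hi.2]

lemma mom_add_add (c α β : MIdx) : mom (c + α) (c + β) = mom α β := by
  rw [mom_eq_sum_of_subset (subset_union_left (s₂ := α.support ∪ β.support)),
    mom_eq_sum_of_subset (subset_union_right (s₁ := (c + α).support ∪ (c + β).support))]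
  refine sum_congr rfl fun i _ => ?_
  simp only [Finsupp.add_apply]
  push_cast
  ring

/-- Sends `((g + α, g + β), (i, m))` with `α ⊓ β = 0` to `((m + α, m + β), (i, g))`. -/
def swapInf {ι : Type*} (σ : (MIdx × MIdx) × (ι × MIdx)) : (MIdx × MIdx) × (ι × MIdx) :=
  ((σ.2.2 + (σ.1.1 - σ.1.1 ⊓ σ.1.2), σ.2.2 + (σ.1.2 - σ.1.1 ⊓ σ.1.2)), (σ.2.1, σ.1.1 ⊓ σ.1.2))

lemma swapInf_involutive {ι : Type*} : Function.Involutive (swapInf (ι := ι)) := by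
  rintro ⟨⟨A, B⟩, i, m⟩
  simp only [swapInf, add_tsub_inf_inf_add_tsub_inf, add_tsub_cancel_left,
    add_tsub_cancel_of_le inf_le_left, add_tsub_cancel_of_le inf_le_right]

lemma tsum_swapInf {M ι : Type*} [AddCommMonoid M] [TopologicalSpace M]
    (f : (MIdx × MIdx) × (ι × MIdx) → M) : ∑' σ, f (swapInf σ) = ∑' σ, f σ :=
  (swapInf_involutive.toPerm _).tsum_eq f

lemma Ipow_eq_prod_of_subset {I : ℤ → ℝ} {ν : MIdx} {T : Finset ℤ} (h : ν.support ⊆ T) :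
    Ipow I ν = ∏ i ∈ T, I i ^ ν i :=
  prod_subset h fun i _ hi => by rw [Finsupp.notMem_support_iff.mp hi, pow_zero]

lemma Ipow_nonneg {I : ℤ → ℝ} (hI : ∀ i, 0 ≤ I i) (ν : MIdx) : 0 ≤ Ipow I ν :=
  prod_nonneg fun i _ => pow_nonneg (hI i) _

lemma Ipow_le_Ipow {I J : ℤ → ℝ} (hI : ∀ i, 0 ≤ I i) (hIJ : ∀ i, I i ≤ J i) (ν : MIdx) :
    Ipow I ν ≤ Ipow J ν :=
  prod_le_prod (fun i _ => pow_nonneg (hI i) _) fun i _ => pow_le_pow_left₀ (hI i) (hIJ i) _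

lemma Ipow_const_mul (c : ℝ) (J : ℤ → ℝ) (ν : MIdx) :
    Ipow (fun i => c * J i) ν = c ^ deg ν * Ipow J ν := by
  simp only [Ipow, mul_pow, prod_mul_distrib, prod_pow_eq_pow_sum]
  rfl

end MultiIndex

section Binomial

lemma sum_Iic_prod_eq_prod_sum {ι R : Type*} [DecidableEq ι] [CommSemiring R] (δ : ι →₀ ℕ)
    (c : ι → ℕ → R) :
    ∑ g ∈ Iic δ, ∏ i ∈ δ.support, c i (g i) = ∏ i ∈ δ.support, ∑ k ∈ Iic (δ i), c i k := by
  have hI : ⇑(Finsupp.rangeIcc 0 δ) = fun i => Iic (δ i) := by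
    ext i : 1; rw [Finsupp.coe_rangeIcc, Finsupp.coe_zero, Pi.zero_apply, ← bot_eq_zero, Icc_bot]
  rw [Iic_eq_Icc, bot_eq_zero, Finsupp.Icc_eq, Finset.finsupp, sum_map, prod_sum,
    Finsupp.support_zero, empty_union, hI]
  refine sum_congr (by congr!) fun f _ => ?_
  rw [← prod_attach]
  refine prod_congr rfl fun i _ => ?_
  simp [Finsupp.indicator_of_mem i.2]

lemma sum_Iic_binomM_mul_pow (δ : MIdx) (t : ℝ) :
    ∑ g ∈ Iic δ, (binomM δ g : ℝ) * t ^ deg g = (1 + t) ^ deg δ := by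
  have hterm : ∀ g ∈ Iic δ,
      (binomM δ g : ℝ) * t ^ deg g = ∏ i ∈ δ.support, ((δ i).choose (g i) * t ^ g i) := by
    intro g hg
    rw [prod_mul_distrib, prod_pow_eq_pow_sum,
      ← deg_eq_sum_of_support_subset (Finsupp.support_mono (mem_Iic.mp hg)), binomM,
      Nat.cast_prod]
  rw [sum_congr rfl hterm, sum_Iic_prod_eq_prod_sum δ fun i k => ((δ i).choose k : ℝ) * t ^ k,
    deg, ← prod_pow_eq_pow_sum]
  refine prod_congr rfl fun i _ => ?_
  rw [← Nat.range_succ_eq_Iic, add_comm (1 : ℝ), add_pow]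
  simp [mul_comm]

lemma sum_binomM_deg_eq_le (m : MIdx) (q : ℕ) {t : ℝ} (ht : 0 < t) :
    ∑ δ ∈ (Iic m).filter (deg · = q), (binomM m δ : ℝ) ≤ (1 + t) ^ deg m / t ^ q := by
  rw [le_div_iff₀ (pow_pos ht q), sum_mul, ← sum_Iic_binomM_mul_pow]
  calc ∑ δ ∈ (Iic m).filter (deg · = q), (binomM m δ : ℝ) * t ^ q
      = ∑ δ ∈ (Iic m).filter (deg · = q), (binomM m δ : ℝ) * t ^ deg δ :=
        sum_congr rfl fun δ hδ => by rw [(mem_filter.mp hδ).2]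
    _ ≤ ∑ δ ∈ Iic m, (binomM m δ : ℝ) * t ^ deg δ :=
        sum_le_sum_of_subset_of_nonneg (filter_subset _ _) fun _ _ _ => by positivity

lemma sum_binomM_deg_eq_mul_le_ckap_pow {κ : ℝ} (hκ0 : 0 < κ) (hκ1 : κ < 1) (m : MIdx) (q : ℕ) :
    (∑ δ ∈ (Iic m).filter (deg · = q), (binomM m δ : ℝ)) * κ ^ (2 * deg m) ≤ ckap κ ^ q := by
  have hκ2 : κ ^ 2 < 1 := by nlinarith
  rw [pow_mul]
  unfold ckap
  split_ifs with hhalf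
  · set c := Real.log (κ ^ 2)⁻¹
    have hc : 0 < c := Real.log_pos ((one_lt_inv₀ (by positivity)).mpr hκ2)
    -- `1 + c ≤ exp c = κ⁻²`
    have hcκ : (1 + c) * κ ^ 2 ≤ 1 := by
      have := Real.add_one_le_exp c
      rw [Real.exp_log (by positivity)] at this
      calc (1 + c) * κ ^ 2 ≤ (κ ^ 2)⁻¹ * κ ^ 2 := by gcongr; linarith
        _ = 1 := inv_mul_cancel₀ (by positivity)
    calc (∑ δ ∈ (Iic m).filter (deg · = q), (binomM m δ : ℝ)) * (κ ^ 2) ^ deg m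
        ≤ (1 + c) ^ deg m / c ^ q * (κ ^ 2) ^ deg m := by
          gcongr; exact sum_binomM_deg_eq_le m q hc
      _ = ((1 + c) * κ ^ 2) ^ deg m * c⁻¹ ^ q := by rw [mul_pow, inv_pow]; ring
      _ ≤ c⁻¹ ^ q := mul_le_of_le_one_left (by positivity) (pow_le_one₀ (by positivity) hcκ)
  · by_cases hq : q ≤ deg m
    · calc (∑ δ ∈ (Iic m).filter (deg · = q), (binomM m δ : ℝ)) * (κ ^ 2) ^ deg m
          ≤ (1 + 1) ^ deg m / 1 ^ q * (κ ^ 2) ^ deg m := by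
            gcongr; exact sum_binomM_deg_eq_le m q one_pos
        _ = (2 * κ ^ 2) ^ deg m := by rw [one_pow, div_one, mul_pow]; norm_num
        _ ≤ (2 * κ ^ 2) ^ q := pow_le_pow_of_le_one (by positivity) (by linarith) hq
    · have hempty : (Iic m).filter (deg · = q) = ∅ :=
        filter_eq_empty_iff.mpr fun δ hδ hδq => hq (hδq ▸ deg_mono (mem_Iic.mp hδ))
      rw [hempty, sum_empty, zero_mul]
      positivity

lemma tsum_binomM_mul_binomM_le {κ x : ℝ} (hκ0 : 0 < κ) (hκ1 : κ < 1) (hx : 0 ≤ x)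
    (m : MIdx) (q : ℕ) :
    ∑' dg : MIdx × MIdx, (if dg.2 ≤ dg.1 ∧ deg dg.1 = q ∧ dg.1 ≤ m then
        ENNReal.ofReal (binomM m dg.1 * binomM dg.1 dg.2 * (x ^ deg dg.2 * κ ^ (2 * deg m)))
      else 0) ≤ ENNReal.ofReal ((1 + x) ^ q * ckap κ ^ q) := by
  set S := (Iic m ×ˢ Iic m).filter fun dg : MIdx × MIdx => dg.2 ≤ dg.1 ∧ deg dg.1 = q ∧ dg.1 ≤ m
  have hS : ∀ dg : MIdx × MIdx,
      dg ∈ S ↔ dg.1 ∈ (Iic m).filter (deg · = q) ∧ dg.2 ∈ Iic dg.1 := by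
    rintro ⟨δ, g⟩
    simp only [S, mem_filter, mem_product, mem_Iic]
    constructor
    · rintro ⟨-, hg, hq, hm⟩; exact ⟨⟨hm, hq⟩, hg⟩
    · rintro ⟨⟨hm, hq⟩, hg⟩; exact ⟨⟨hm, hg.trans hm⟩, hg, hq, hm⟩
  rw [tsum_eq_sum (s := S) fun dg hdg => if_neg fun h => hdg ((hS dg).mpr
      ⟨mem_filter.mpr ⟨mem_Iic.mpr h.2.2, h.2.1⟩, mem_Iic.mpr h.1⟩),
    sum_congr rfl fun dg hdg => if_pos (mem_filter.mp hdg).2,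
    ← ENNReal.ofReal_sum_of_nonneg fun _ _ => by positivity]
  refine ENNReal.ofReal_le_ofReal ?_
  calc _ = ∑ δ ∈ (Iic m).filter (deg · = q), ∑ g ∈ Iic δ,
        (binomM m δ : ℝ) * binomM δ g * (x ^ deg g * κ ^ (2 * deg m)) :=
        sum_finset_product' S _ _ hS
    _ = (∑ δ ∈ (Iic m).filter (deg · = q), (binomM m δ : ℝ)) * κ ^ (2 * deg m) *
          (1 + x) ^ q := by
        rw [sum_mul, sum_mul]
        refine sum_congr rfl fun δ hδ => ?_
        rw [← (mem_filter.mp hδ).2, ← sum_Iic_binomM_mul_pow, mul_sum]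
        exact sum_congr rfl fun g _ => by ring
    _ ≤ ckap κ ^ q * (1 + x) ^ q := by
        gcongr; exact sum_binomM_deg_eq_mul_le_ckap_pow hκ0 hκ1 m q
    _ = (1 + x) ^ q * ckap κ ^ q := mul_comm _ _

end Binomial

section Weights

variable {θ p a r s η : ℝ}

lemma jb_pos (j : ℤ) : 0 < jb j := lt_of_lt_of_le one_pos (le_max_right _ _)

lemma u0_pos (hr : 0 < r) (j : ℤ) : 0 < u0 θ p a r s j := by
  have := jb_pos j
  unfold u0
  positivity

lemma u0_mul_radius (c : ℝ) (j : ℤ) : u0 θ p a (c * r) s j = c * u0 θ p a r s j := by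
  unfold u0; ring

lemma u0_sq (j : ℤ) :
    u0 θ p a r s j ^ 2 =
      r ^ 2 / (jb j ^ (2 * p) * Real.exp (2 * a * |(j : ℝ)| + 2 * s * jb j ^ θ)) := by
  rw [two_mul p, Real.rpow_add (jb_pos j), show 2 * a * |(j : ℝ)| + 2 * s * jb j ^ θ =
    (a * |(j : ℝ)| + s * jb j ^ θ) + (a * |(j : ℝ)| + s * jb j ^ θ) by ring, Real.exp_add, u0]
  field_simp

lemma prod_zpow_eq_zpow_sum {G ι : Type*} [CommGroupWithZero G] {c : G} (hc : c ≠ 0)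
    (T : Finset ι) (e : ι → ℤ) :
    ∏ i ∈ T, c ^ e i = c ^ ∑ i ∈ T, e i := by
  induction T using Finset.cons_induction with
  | empty => simp
  | cons i T hi ih => rw [prod_cons, sum_cons, ih, zpow_add₀ hc]

lemma cwt_eq_prod_of_subset {j : ℤ} {A B : MIdx} {T : Finset ℤ}
    (hj : j ∈ T) (hT : A.support ∪ B.support ⊆ T) :
    cwt θ p a r s η j A B =
      (∏ i ∈ T, u0 θ p a r s i ^ (((A i : ℤ) + B i) - if i = j then 2 else 0)) *
        Real.exp (η * |(mom A B : ℝ)|) := by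
  refine congrArg (· * _) (prod_subset (insert_subset hj hT) fun i hiT hi => ?_)
  simp only [mem_insert, mem_union, Finsupp.mem_support_iff, not_or, not_not] at hi
  simp [hi.1, hi.2.1, hi.2.2]

lemma cwt_pos (hr : 0 < r) (j : ℤ) (A B : MIdx) : 0 < cwt θ p a r s η j A B :=
  mul_pos (prod_pos fun i _ => zpow_pos (u0_pos hr i) _) (Real.exp_pos _)

lemma cwt_mul_radius {c : ℝ} (hc : c ≠ 0) (j : ℤ) (A B : MIdx) :
    cwt θ p a (c * r) s η j A B = c ^ ((deg A + deg B : ℤ) - 2) * cwt θ p a r s η j A B := by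
  set T := insert j (A.support ∪ B.support)
  have hA : A.support ⊆ T := subset_union_left.trans (subset_insert _ _)
  have hB : B.support ⊆ T := subset_union_right.trans (subset_insert _ _)
  have hexp : ∑ i ∈ T, (((A i : ℤ) + B i) - if i = j then 2 else 0) =
      (deg A + deg B : ℤ) - 2 := by
    rw [sum_sub_distrib, sum_add_distrib, sum_ite_eq', if_pos (mem_insert_self _ _),
      deg_eq_sum_of_support_subset hA, deg_eq_sum_of_support_subset hB, Nat.cast_sum,
      Nat.cast_sum]
  simp only [cwt, u0_mul_radius, mul_zpow, prod_mul_distrib]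
  rw [prod_zpow_eq_zpow_sum hc, hexp, mul_assoc]

lemma cwt_add_add (hr : 0 < r) (j : ℤ) (d A B : MIdx) :
    cwt θ p a r s η j (d + A) (d + B) =
      Ipow (fun i => u0 θ p a r s i ^ 2) d * cwt θ p a r s η j A B := by
  set T := insert j ((d + A).support ∪ (d + B).support)
  have hdA : ∀ {ν : MIdx}, ν ≤ d + A → ν.support ⊆ T := fun h =>
    (Finsupp.support_mono h).trans (subset_union_left.trans (subset_insert _ _))
  have hdB : ∀ {ν : MIdx}, ν ≤ d + B → ν.support ⊆ T := fun h =>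
    (Finsupp.support_mono h).trans (subset_union_right.trans (subset_insert _ _))
  rw [cwt_eq_prod_of_subset (mem_insert_self _ _) (subset_insert _ _),
    cwt_eq_prod_of_subset (mem_insert_self _ _) (union_subset (hdA le_add_self) (hdB le_add_self)),
    Ipow_eq_prod_of_subset (hdA le_self_add), mom_add_add, ← mul_assoc, ← prod_mul_distrib]
  refine congrArg (· * _) (prod_congr rfl fun i _ => ?_)
  rw [← pow_mul, ← zpow_natCast, ← zpow_add₀ (u0_pos hr i).ne']
  simp only [Finsupp.add_apply]
  push_cast
  ring_nf

lemma mul_cwt_mul_Ipow_le {κ κs : ℝ} {I : ℤ → ℝ} (hκ0 : 0 < κ) (hr : 0 < r) (hκs0 : 0 < κs)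
    (hκs1 : κs ≤ 1) (hI : ∀ i, 0 ≤ I i) (hIu : ∀ i, I i ≤ κ ^ 2 * u0 θ p a r s i ^ 2)
    {g m : MIdx} (hgm : g ≤ m) (j : ℤ) (α β : MIdx) :
    ((g + β) j : ℝ) * cwt θ p a (κs * r) s η j (g + α) (g + β) * Ipow I (m - g) ≤
      (κs ^ 2 / κ ^ 2) ^ deg g * κ ^ (2 * deg m) * (κs ^ 2)⁻¹ *
        (((m + β) j : ℝ) * cwt θ p a r s η j (m + α) (m + β)) := by
  set W := cwt θ p a r s η j (g + α) (g + β)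
  set U := Ipow (fun i => u0 θ p a r s i ^ 2) (m - g)
  have hm : ∀ ν, m + ν = (m - g) + (g + ν) := fun ν => by
    rw [← add_assoc, tsub_add_cancel_of_le hgm]
  have hdeg : deg m = deg (m - g) + deg g := by rw [← deg_add, tsub_add_cancel_of_le hgm]
  have hW : cwt θ p a r s η j (m + α) (m + β) = U * W := by rw [hm α, hm β, cwt_add_add hr]
  have hscale :
      cwt θ p a (κs * r) s η j (g + α) (g + β) ≤ κs ^ (2 * deg g) * (κs ^ 2)⁻¹ * W := by
    have hexp : ((2 * deg g : ℕ) : ℤ) - 2 ≤ (deg (g + α) + deg (g + β) : ℤ) - 2 := by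
      rw [deg_add, deg_add]; push_cast; omega
    have hpow : κs ^ (2 * deg g) * (κs ^ 2)⁻¹ = κs ^ (((2 * deg g : ℕ) : ℤ) - 2) := by
      rw [zpow_sub₀ hκs0.ne', zpow_natCast, div_eq_mul_inv]; norm_cast
    rw [cwt_mul_radius hκs0.ne', hpow]
    exact mul_le_mul_of_nonneg_right (zpow_le_zpow_right_of_le_one₀ hκs0 hκs1 hexp)
      (cwt_pos hr j _ _).le
  have hIpow : Ipow I (m - g) ≤ κ ^ (2 * deg (m - g)) * U := by
    calc Ipow I (m - g) ≤ Ipow (fun i => κ ^ 2 * u0 θ p a r s i ^ 2) (m - g) :=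
          Ipow_le_Ipow hI hIu _
      _ = κ ^ (2 * deg (m - g)) * U := by rw [Ipow_const_mul, pow_mul]
  have hj : ((g + β) j : ℝ) ≤ (m + β) j := by
    simp only [Finsupp.add_apply]; exact_mod_cast Nat.add_le_add_right (hgm j) _
  calc ((g + β) j : ℝ) * cwt θ p a (κs * r) s η j (g + α) (g + β) * Ipow I (m - g)
      ≤ (m + β) j * (κs ^ (2 * deg g) * (κs ^ 2)⁻¹ * W) * (κ ^ (2 * deg (m - g)) * U) := by
        have hW0 : 0 ≤ W := (cwt_pos hr j _ _).le
        have hc0 := (cwt_pos (θ := θ) (p := p) (a := a) (s := s) (η := η) (mul_pos hκs0 hr) j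
          (g + α) (g + β)).le
        have hI0 := Ipow_nonneg hI (m - g)
        gcongr
    _ = (κs ^ 2 / κ ^ 2) ^ deg g * κ ^ (2 * deg m) * (κs ^ 2)⁻¹ *
          (((m + β) j : ℝ) * cwt θ p a r s η j (m + α) (m + β)) := by
        have hκ : κ ^ (2 * deg g) ≠ 0 := pow_ne_zero _ hκ0.ne'
        rw [hW, hdeg, div_pow, ← pow_mul, ← pow_mul, mul_add, pow_add]
        field_simp

end Weights

lemma ofReal_norm_tsum_mul_le {ι : Type*} (f : ι → ℂ) {c : ℝ} (hc : 0 ≤ c) :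
    ENNReal.ofReal (‖∑' i, f i‖ * c) ≤ ∑' i, ENNReal.ofReal (‖f i‖ * c) := by
  by_cases hf : Summable f
  · have hn : Summable fun i => ‖f i‖ := summable_norm_iff.mpr hf
    calc ENNReal.ofReal (‖∑' i, f i‖ * c) ≤ ENNReal.ofReal ((∑' i, ‖f i‖) * c) := by
          gcongr; exact norm_tsum_le_tsum_norm hn
      _ = ∑' i, ENNReal.ofReal (‖f i‖ * c) := by
          rw [← tsum_mul_right, ENNReal.ofReal_tsum_of_nonneg (fun i => by positivity)
            (hn.mul_right c)]
  · simp [tsum_eq_zero_of_not_summable hf]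

section Projection

variable {θ p a κ r s η κs : ℝ} {I : ℤ → ℝ}

lemma ofReal_norm_projCoef_mul_le (hI : ∀ i, 0 ≤ I i) (q : ℕ)
    (H : MIdx → MIdx → ℂ) (A B : MIdx) {c : ℝ} (hc : 0 ≤ c) :
    ENNReal.ofReal (‖projCoef I q H A B‖ * c) ≤
      ∑' dm : MIdx × MIdx, if A ⊓ B ≤ dm.1 ∧ deg dm.1 = q ∧ dm.1 ≤ dm.2 then
        ENNReal.ofReal (binomM dm.2 dm.1 * binomM dm.1 (A ⊓ B) * Ipow I (dm.2 - A ⊓ B) *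
          ‖H (dm.2 + (A - A ⊓ B)) (dm.2 + (B - A ⊓ B))‖ * c)
      else 0 := by
  simp only [projCoef, tsub_tsub_eq_inf]
  split_ifs with hq
  · refine (ofReal_norm_tsum_mul_le _ hc).trans (ENNReal.tsum_le_tsum fun dm => ?_)
    split_ifs
    · simp [abs_of_nonneg (Ipow_nonneg hI _)]
    · simp
  · simp

lemma le_mul_u0_sq {j : ℤ}
    (hIb : I j * (jb j ^ (2 * p) * Real.exp (2 * a * |(j : ℝ)| + 2 * s * jb j ^ θ)) ≤
      κ ^ 2 * r ^ 2) :
    I j ≤ κ ^ 2 * u0 θ p a r s j ^ 2 := by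
  have := jb_pos j
  rw [u0_sq, mul_div_assoc', le_div_iff₀ (by positivity)]
  exact hIb

variable (θ p a r s η κs I) in
/-- The term of the series bounding `‖projCoef I q H A B‖ B_j c^{(j)}_{κ* r}(A, B)`,
at `σ = ((A, B), (δ, m))`. -/
def projMajorant (q : ℕ) (H : MIdx → MIdx → ℂ) (j : ℤ) (σ : (MIdx × MIdx) × (MIdx × MIdx)) :
    ℝ≥0∞ :=
  let A := σ.1.1; let B := σ.1.2; let δ := σ.2.1; let m := σ.2.2
  if A ⊓ B ≤ δ ∧ deg δ = q ∧ δ ≤ m then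
    ENNReal.ofReal (binomM m δ * binomM δ (A ⊓ B) * Ipow I (m - A ⊓ B) *
      ‖H (m + (A - A ⊓ B)) (m + (B - A ⊓ B))‖ * ((B j : ℝ) * cwt θ p a (κs * r) s η j A B))
  else 0

lemma projMajorant_swapInf_le (hκ0 : 0 < κ) (hr : 0 < r) (hκs0 : 0 < κs) (hκs1 : κs ≤ 1)
    (hI : ∀ i, 0 ≤ I i) (hIu : ∀ i, I i ≤ κ ^ 2 * u0 θ p a r s i ^ 2) (q : ℕ)
    (H : MIdx → MIdx → ℂ) (j : ℤ) (Y : MIdx × MIdx) (δ g : MIdx) :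
    projMajorant θ p a r s η κs I q H j (swapInf (Y, (δ, g))) ≤
      (if g ≤ δ ∧ deg δ = q ∧ δ ≤ Y.1 ⊓ Y.2 then
        ENNReal.ofReal (binomM (Y.1 ⊓ Y.2) δ * binomM δ g *
          ((κs ^ 2 / κ ^ 2) ^ deg g * κ ^ (2 * deg (Y.1 ⊓ Y.2))))
      else 0) * (ENNReal.ofReal (κs ^ 2)⁻¹ *
        ENNReal.ofReal (‖H Y.1 Y.2‖ * (Y.2 j : ℝ) * cwt θ p a r s η j Y.1 Y.2)) := by
  obtain ⟨Y₁, Y₂⟩ := Y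
  simp only [projMajorant, swapInf, add_tsub_inf_inf_add_tsub_inf, add_tsub_cancel_left,
    add_tsub_cancel_of_le (inf_le_left : Y₁ ⊓ Y₂ ≤ Y₁),
    add_tsub_cancel_of_le (inf_le_right : Y₁ ⊓ Y₂ ≤ Y₂)]
  split_ifs with h
  · have key := mul_cwt_mul_Ipow_le (η := η) hκ0 hr hκs0 hκs1 hI hIu (h.1.trans h.2.2) j
      (Y₁ - Y₁ ⊓ Y₂) (Y₂ - Y₁ ⊓ Y₂)
    rw [add_tsub_cancel_of_le inf_le_left, add_tsub_cancel_of_le inf_le_right] at key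
    rw [← ENNReal.ofReal_mul (by positivity), ← ENNReal.ofReal_mul (by positivity)]
    refine ENNReal.ofReal_le_ofReal ?_
    calc _ = (binomM (Y₁ ⊓ Y₂) δ * binomM δ g * ‖H Y₁ Y₂‖ : ℝ) *
          ((g + (Y₂ - Y₁ ⊓ Y₂)) j * cwt θ p a (κs * r) s η j (g + (Y₁ - Y₁ ⊓ Y₂))
            (g + (Y₂ - Y₁ ⊓ Y₂)) * Ipow I (Y₁ ⊓ Y₂ - g)) := by ring
      _ ≤ _ := mul_le_mul_of_nonneg_left key (by positivity)
      _ = _ := by ring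
  · rw [zero_mul]

lemma tsum_projCoef_le (hκ0 : 0 < κ) (hκ1 : κ < 1) (hr : 0 < r) (hκs0 : 0 < κs)
    (hκs1 : κs ≤ 1) (hI : ∀ i, 0 ≤ I i) (hIu : ∀ i, I i ≤ κ ^ 2 * u0 θ p a r s i ^ 2) (q : ℕ)
    (H : MIdx → MIdx → ℂ) (j : ℤ) :
    ∑' AB : MIdx × MIdx, ENNReal.ofReal
        (‖projCoef I q H AB.1 AB.2‖ * (AB.2 j : ℝ) * cwt θ p a (κs * r) s η j AB.1 AB.2) ≤
      ENNReal.ofReal ((κs ^ 2)⁻¹ * (1 + κs ^ 2 / κ ^ 2) ^ q * ckap κ ^ q) *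
        ∑' Y : MIdx × MIdx,
          ENNReal.ofReal (‖H Y.1 Y.2‖ * (Y.2 j : ℝ) * cwt θ p a r s η j Y.1 Y.2) := by
  set F : MIdx × MIdx → ℝ≥0∞ := fun Y =>
    ENNReal.ofReal (‖H Y.1 Y.2‖ * (Y.2 j : ℝ) * cwt θ p a r s η j Y.1 Y.2)
  set T := projMajorant θ p a r s η κs I q H j
  calc ∑' AB : MIdx × MIdx, ENNReal.ofReal
        (‖projCoef I q H AB.1 AB.2‖ * (AB.2 j : ℝ) * cwt θ p a (κs * r) s η j AB.1 AB.2)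
      ≤ ∑' AB : MIdx × MIdx, ∑' dm : MIdx × MIdx, T (AB, dm) :=
        ENNReal.tsum_le_tsum fun AB => by
          rw [mul_assoc]
          exact ofReal_norm_projCoef_mul_le hI q H AB.1 AB.2
            (mul_nonneg (Nat.cast_nonneg _) (cwt_pos (mul_pos hκs0 hr) j _ _).le)
    _ = ∑' σ, T (swapInf σ) := by rw [tsum_swapInf T, ← ENNReal.tsum_prod]
    _ ≤ ∑' σ : (MIdx × MIdx) × (MIdx × MIdx),
          (if σ.2.2 ≤ σ.2.1 ∧ deg σ.2.1 = q ∧ σ.2.1 ≤ σ.1.1 ⊓ σ.1.2 then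
            ENNReal.ofReal (binomM (σ.1.1 ⊓ σ.1.2) σ.2.1 * binomM σ.2.1 σ.2.2 *
              ((κs ^ 2 / κ ^ 2) ^ deg σ.2.2 * κ ^ (2 * deg (σ.1.1 ⊓ σ.1.2))))
          else 0) * (ENNReal.ofReal (κs ^ 2)⁻¹ * F σ.1) :=
        ENNReal.tsum_le_tsum fun σ =>
          projMajorant_swapInf_le hκ0 hr hκs0 hκs1 hI hIu q H j σ.1 σ.2.1 σ.2.2
    _ ≤ ∑' Y, ENNReal.ofReal ((1 + κs ^ 2 / κ ^ 2) ^ q * ckap κ ^ q) *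
          (ENNReal.ofReal (κs ^ 2)⁻¹ * F Y) := by
        rw [ENNReal.tsum_prod']
        refine ENNReal.tsum_le_tsum fun Y => ?_
        dsimp only
        rw [ENNReal.tsum_mul_right]
        gcongr
        exact tsum_binomM_mul_binomM_le hκ0 hκ1 (by positivity) _ q
    _ = _ := by
        rw [ENNReal.tsum_mul_left, ENNReal.tsum_mul_left, mul_assoc (κs ^ 2)⁻¹,
          ENNReal.ofReal_mul (inv_nonneg.mpr (sq_nonneg κs))]
        ring

end Projection

theorem projection_bound_general
    (θ p a : ℝ)
    (κ r s η : ℝ) (hκ0 : 0 < κ) (hκ1 : κ < 1) (hr : 0 < r)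
    (I : ℤ → ℝ) (hI : ∀ j, 0 ≤ I j)
    (hIb : ∀ j : ℤ,
      I j * (jb j ^ (2 * p) * Real.exp (2 * a * |(j : ℝ)| + 2 * s * jb j ^ θ)) ≤
        κ ^ 2 * r ^ 2)
    (H : MIdx → MIdx → ℂ)
    (q : ℕ) (κs : ℝ) (hκs0 : 0 < κs) (hκs1 : κs ≤ 1) :
    hnorm θ p a (κs * r) s η (projCoef I q H) ≤
      ENNReal.ofReal ((κs ^ 2)⁻¹ * (1 + κs ^ 2 / κ ^ 2) ^ q * ckap κ ^ q) *
        hnorm θ p a r s η H :=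
  iSup_le fun j =>
    (tsum_projCoef_le hκ0 hκ1 hr hκs0 hκs1 hI (fun i => le_mul_u0_sq (hIb i)) q H j).trans
      (mul_le_mul_right (le_iSup (fun j => ∑' Y : MIdx × MIdx,
        ENNReal.ofReal (‖H Y.1 Y.2‖ * (Y.2 j : ℝ) * cwt θ p a r s η j Y.1 Y.2)) j) _)

/-- Proposition `proiettotutto` (ii): if `I_j ≥ 0` with
`sup_j I_j ⟨j⟩^{2p} e^{2a|j|+2s⟨j⟩^θ} ≤ κ²r²`, then for every `q ∈ ℕ` and `0 < κ* ≤ 1`,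
`|Π^{2q-2}H|_{κ*r,s,η} ≤ κ*^{-2} (1 + κ*²/κ²)^q c_κ^q |H|_{r,s,η}`. -/
theorem projection_bound
    (θ p a : ℝ) (hθ0 : 0 < θ) (hθ1 : θ < 1) (hp : 1 < p) (ha : 0 ≤ a)
    (κ r s η : ℝ) (hκ0 : 0 < κ) (hκ1 : κ < 1) (hr : 0 < r) (hs : 0 < s) (hη : 0 ≤ η)
    (I : ℤ → ℝ) (hI : ∀ j, 0 ≤ I j)
    (hIb : ∀ j : ℤ,
      I j * (jb j ^ (2 * p) * Real.exp (2 * a * |(j : ℝ)| + 2 * s * jb j ^ θ)) ≤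
        κ ^ 2 * r ^ 2)
    (H : MIdx → MIdx → ℂ) (hH : IsHam H)
    (q : ℕ) (κs : ℝ) (hκs0 : 0 < κs) (hκs1 : κs ≤ 1) :
    hnorm θ p a (κs * r) s η (projCoef I q H) ≤
      ENNReal.ofReal ((κs ^ 2)⁻¹ * (1 + κs ^ 2 / κ ^ 2) ^ q * ckap κ ^ q) *
        hnorm θ p a r s η H :=
  projection_bound_general θ p a κ r s η hκ0 hκ1 hr I hI hIb H q κs hκs0 hκs1

end
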